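/- If H and H̃ are Hermitian positive definite n×n matrices with η = ‖H^{-1/2}(H - H̃)H^{-1/2}‖₂ < 1, then for all vectors x, y ∈ ℂⁿ, |x*(H - H̃)y| ≤ (η/√(1-η)) · √(x*Hx · y*H̃y). -/

import Mathlib

/-!
Write `H = R * R` with `R = H^{1/2}` Hermitian and `M = R⁻¹ (H - H̃) R⁻¹`, so that `η = ‖M‖₂`.
The form `x* (H - H̃) y` equals `(R x)* M (R y)`, hence is bounded by `η ‖R x‖ ‖R y‖`, and
`‖R x‖² = x* H x`. Applied with `x = y` the same bound gives `y* H̃ y ≥ (1 - η) ‖R y‖²`,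
which trades `‖R y‖` for `√(y* H̃ y / (1 - η))`.
-/

open Matrix
open scoped ComplexOrder

noncomputable def specNorm {n : Type*} [Fintype n] [DecidableEq n] (A : Matrix n n ℂ) : ℝ :=
  ‖Matrix.toEuclideanCLM (𝕜 := ℂ) A‖

noncomputable def frobNorm {m k : Type*} [Fintype m] [Fintype k] (A : Matrix m k ℂ) : ℝ :=
  Real.sqrt (∑ i, ∑ j, ‖A i j‖ ^ 2)

noncomputable def psqrt {n : Type*} [Fintype n] [DecidableEq n] {A : Matrix n n ℂ}
    (hA : A.PosDef) : Matrix n n ℂ :=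
  (hA.posSemidef.1.eigenvectorUnitary : Matrix n n ℂ) *
    diagonal ((↑) ∘ (Real.sqrt ·) ∘ hA.posSemidef.1.eigenvalues) *
    (star hA.posSemidef.1.eigenvectorUnitary : Matrix n n ℂ)

lemma mul_le_div_sqrt_mul_sqrt {η a b c : ℝ} (hη₀ : 0 ≤ η) (hη₁ : η < 1) (ha : 0 ≤ a)
    (hb : 0 ≤ b) (hc : (1 - η) * b ^ 2 ≤ c) :
    η * (a * b) ≤ η / √(1 - η) * √(a ^ 2 * c) := by
  have hs : 0 < √(1 - η) := Real.sqrt_pos.2 (by linarith)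
  calc η * (a * b) = η / √(1 - η) * √(a ^ 2 * ((1 - η) * b ^ 2)) := by
        rw [Real.sqrt_mul (sq_nonneg a), Real.sqrt_mul (by linarith), Real.sqrt_sq ha,
          Real.sqrt_sq hb]
        field_simp
    _ ≤ η / √(1 - η) * √(a ^ 2 * c) := by gcongr

variable {n : Type*} [Fintype n]

lemma norm_toLp_sq (u : n → ℂ) : ‖WithLp.toLp 2 u‖ ^ 2 = (star u ⬝ᵥ u).re := by
  rw [← inner_self_eq_norm_sq (𝕜 := ℂ), EuclideanSpace.inner_eq_star_dotProduct, dotProduct_comm]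
  rfl

lemma star_mulVec_dotProduct_mulVec {R : Matrix n n ℂ} (hR : R.IsHermitian) (M : Matrix n n ℂ)
    (x y : n → ℂ) : star (R *ᵥ x) ⬝ᵥ (M *ᵥ (R *ᵥ y)) = star x ⬝ᵥ ((R * M * R) *ᵥ y) := by
  rw [star_mulVec, hR.eq, ← dotProduct_mulVec, mulVec_mulVec, mulVec_mulVec, Matrix.mul_assoc]

variable [DecidableEq n]

lemma norm_toLp_mulVec_sq {R : Matrix n n ℂ} (hR : R.IsHermitian) (x : n → ℂ) :
    ‖WithLp.toLp 2 (R *ᵥ x)‖ ^ 2 = (star x ⬝ᵥ ((R * R) *ᵥ x)).re := by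
  have h := star_mulVec_dotProduct_mulVec hR 1 x x
  rw [one_mulVec, Matrix.mul_one] at h
  rw [norm_toLp_sq, h]

lemma norm_star_dotProduct_mulVec_le (M : Matrix n n ℂ) (u v : n → ℂ) :
    ‖star u ⬝ᵥ (M *ᵥ v)‖ ≤ specNorm M * (‖WithLp.toLp 2 u‖ * ‖WithLp.toLp 2 v‖) := by
  have h : star u ⬝ᵥ (M *ᵥ v) =
      inner ℂ (WithLp.toLp 2 u) (toEuclideanCLM (𝕜 := ℂ) M (WithLp.toLp 2 v)) := by
    rw [toEuclideanCLM_toLp, EuclideanSpace.inner_eq_star_dotProduct, dotProduct_comm]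
  calc ‖star u ⬝ᵥ (M *ᵥ v)‖
      ≤ ‖WithLp.toLp 2 u‖ * ‖toEuclideanCLM (𝕜 := ℂ) M (WithLp.toLp 2 v)‖ :=
        h ▸ norm_inner_le_norm _ _
    _ ≤ ‖WithLp.toLp 2 u‖ * (specNorm M * ‖WithLp.toLp 2 v‖) := by
        gcongr; exact (toEuclideanCLM (𝕜 := ℂ) M).le_opNorm _
    _ = _ := by ring

lemma norm_star_dotProduct_mulVec_le_specNorm_conj {R : Matrix n n ℂ} (hR : R.IsHermitian)
    (hdet : IsUnit R.det) (E : Matrix n n ℂ) (x y : n → ℂ) :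
    ‖star x ⬝ᵥ (E *ᵥ y)‖ ≤
      specNorm (R⁻¹ * E * R⁻¹) * (‖WithLp.toLp 2 (R *ᵥ x)‖ * ‖WithLp.toLp 2 (R *ᵥ y)‖) := by
  have hE : R * (R⁻¹ * E * R⁻¹) * R = E := by
    simp only [Matrix.mul_assoc, nonsing_inv_mul R hdet, Matrix.mul_one,
      mul_nonsing_inv_cancel_left R _ hdet]
  calc ‖star x ⬝ᵥ (E *ᵥ y)‖ = ‖star (R *ᵥ x) ⬝ᵥ ((R⁻¹ * E * R⁻¹) *ᵥ (R *ᵥ y))‖ := by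
        rw [star_mulVec_dotProduct_mulVec hR, hE]
    _ ≤ _ := norm_star_dotProduct_mulVec_le _ _ _

lemma psqrt_isHermitian {A : Matrix n n ℂ} (hA : A.PosDef) : (psqrt hA).IsHermitian := by
  rw [psqrt, star_eq_conjTranspose]
  exact isHermitian_mul_mul_conjTranspose _ <| isHermitian_diagonal_of_self_adjoint _ <|
    funext fun i => by simp

lemma psqrt_mul_self {A : Matrix n n ℂ} (hA : A.PosDef) : psqrt hA * psqrt hA = A := by
  set U := hA.posSemidef.1.eigenvectorUnitary
  have hD : (diagonal ((↑) ∘ (Real.sqrt ·) ∘ hA.posSemidef.1.eigenvalues) : Matrix n n ℂ) *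
      diagonal ((↑) ∘ (Real.sqrt ·) ∘ hA.posSemidef.1.eigenvalues) =
        diagonal (RCLike.ofReal ∘ hA.posSemidef.1.eigenvalues) := by
    rw [diagonal_mul_diagonal]
    congr 1; funext i
    simp only [Function.comp_apply]
    rw [← Complex.ofReal_mul, Real.mul_self_sqrt (hA.posSemidef.eigenvalues_nonneg i)]
    rfl
  conv_rhs => rw [hA.posSemidef.1.spectral_theorem, Unitary.conjStarAlgAut_apply, ← hD]
  simp only [psqrt, Matrix.mul_assoc]
  rw [← Matrix.mul_assoc (star (U : Matrix n n ℂ)), Unitary.coe_star_mul_self, Matrix.one_mul]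

lemma isUnit_det_psqrt {A : Matrix n n ℂ} (hA : A.PosDef) : IsUnit (psqrt hA).det := by
  have h : IsUnit ((psqrt hA).det * (psqrt hA).det) := by
    rw [← det_mul, psqrt_mul_self]
    exact hA.det_pos.ne'.isUnit
  exact isUnit_of_mul_isUnit_left h

lemma one_sub_specNorm_mul_le_re {R H : Matrix n n ℂ} (hR : R.IsHermitian) (hdet : IsUnit R.det)
    (hRR : R * R = H) (Ht : Matrix n n ℂ) (y : n → ℂ) :
    (1 - specNorm (R⁻¹ * (H - Ht) * R⁻¹)) * ‖WithLp.toLp 2 (R *ᵥ y)‖ ^ 2 ≤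
      (star y ⬝ᵥ (Ht *ᵥ y)).re := by
  have hsplit : (star y ⬝ᵥ (Ht *ᵥ y)).re =
      ‖WithLp.toLp 2 (R *ᵥ y)‖ ^ 2 - (star y ⬝ᵥ ((H - Ht) *ᵥ y)).re := by
    rw [norm_toLp_mulVec_sq hR, hRR, sub_mulVec, dotProduct_sub, Complex.sub_re]
    ring
  have hE : (star y ⬝ᵥ ((H - Ht) *ᵥ y)).re ≤
      specNorm (R⁻¹ * (H - Ht) * R⁻¹) * ‖WithLp.toLp 2 (R *ᵥ y)‖ ^ 2 :=
    calc _ ≤ ‖star y ⬝ᵥ ((H - Ht) *ᵥ y)‖ := Complex.re_le_norm _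
      _ ≤ _ := (norm_star_dotProduct_mulVec_le_specNorm_conj hR hdet _ y y).trans_eq (by ring)
  linarith

theorem stmt_1_general {n : ℕ} (H Ht : Matrix (Fin n) (Fin n) ℂ)
    (hH : H.PosDef) (η : ℝ)
    (hη : η = specNorm ((psqrt hH)⁻¹ * (H - Ht) * (psqrt hH)⁻¹)) (hlt : η < 1) :
    ∀ x y : Fin n → ℂ,
      ‖star x ⬝ᵥ ((H - Ht) *ᵥ y)‖ ≤
        η / Real.sqrt (1 - η) *
          Real.sqrt ((star x ⬝ᵥ (H *ᵥ x)).re * (star y ⬝ᵥ (Ht *ᵥ y)).re) := by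
  intro x y
  have hR := psqrt_isHermitian hH
  have hdet := isUnit_det_psqrt hH
  have hRR := psqrt_mul_self hH
  calc ‖star x ⬝ᵥ ((H - Ht) *ᵥ y)‖
      ≤ η * (‖WithLp.toLp 2 (psqrt hH *ᵥ x)‖ * ‖WithLp.toLp 2 (psqrt hH *ᵥ y)‖) :=
        hη ▸ norm_star_dotProduct_mulVec_le_specNorm_conj hR hdet _ x y
    _ ≤ η / √(1 - η) * √(‖WithLp.toLp 2 (psqrt hH *ᵥ x)‖ ^ 2 * (star y ⬝ᵥ (Ht *ᵥ y)).re) :=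
        mul_le_div_sqrt_mul_sqrt (hη ▸ norm_nonneg _) hlt (norm_nonneg _) (norm_nonneg _)
          (hη ▸ one_sub_specNorm_mul_le_re hR hdet hRR Ht y)
    _ = _ := by rw [norm_toLp_mulVec_sq hR, hRR]

theorem stmt_1 {n : ℕ} (H Ht : Matrix (Fin n) (Fin n) ℂ)
    (hH : H.PosDef) (hHt : Ht.PosDef) (η : ℝ)
    (hη : η = specNorm ((psqrt hH)⁻¹ * (H - Ht) * (psqrt hH)⁻¹)) (hlt : η < 1) :
    ∀ x y : Fin n → ℂ,
      ‖star x ⬝ᵥ ((H - Ht) *ᵥ y)‖ ≤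
        η / Real.sqrt (1 - η) *
          Real.sqrt ((star x ⬝ᵥ (H *ᵥ x)).re * (star y ⬝ᵥ (Ht *ᵥ y)).re) :=
  stmt_1_general H Ht hH η hη hlt
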